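/- There exists a constant C < ∞ such that for every ε with 0 < ε ≤ 1/3 and every γ ∈ I, one has ∫_{[0,1)³} |e(p) − γ − iε|^{−3/2} dp ≤ C·ε^{−1/2}·|log ε|^{3/2}; equivalently, (∫_{[0,1)³} |e(p) − γ − iε|^{−3/2} dp)^{2/3} ≤ C′·ε^{−1/3}·|log ε| for a constant C′. -/

import Mathlib

open MeasureTheory Real

/-- The lattice dispersion relation `e(k) = 3 - cos(2πk₁) - cos(2πk₂) - cos(2πk₃)`. -/
noncomputable def disp (k : Fin 3 → ℝ) : ℝ := 3 - ∑ i, Real.cos (2 * Real.pi * k i)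

/-- The boundary of the rectangle in `ℂ` with vertices `-1, 7, 7-i, -1-i`. -/
def RectI : Set ℂ := {α | -1 ≤ α.re ∧ α.re ≤ 7 ∧ -1 ≤ α.im ∧ α.im ≤ 0 ∧
  (α.re = -1 ∨ α.re = 7 ∨ α.im = -1 ∨ α.im = 0)}

/-- The fundamental domain `[0,1)³` of the torus. -/
def box3 : Set (Fin 3 → ℝ) := Set.univ.pi fun _ => Set.Ico (0 : ℝ) 1

/-!
Since `e` takes values in `[0, 6]` and `γ` runs over the boundary of a rectangle around
`[0, 6] × {0}`, either `|Re (e - γ)| ≥ 1` or `|Im (e - γ - iε)| ≥ ε`; hence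
`|e(p) - γ - iε| ≥ (ε + |e(p) - Re γ|) / 2` and it suffices to bound
`∫ (ε + |e(p) - a|)^(-3/2) dp` for real `a`.

One cosine at a time: by Jordan's inequality `sin x ≥ 2x/π`, the band
`{x : |cos 2πx - c| ≤ t}` has measure `≤ √t`, and `≤ 2t/√d` where `d` is the distance of `c`
to the critical values `±1`. Writing `(ε + u)^(-p) = p ∫_u^∞ (ε + r)^(-p-1) dr` and exchanging
the integrals turns these into
`∫ (ε + |cos 2πx - w|)^(-3/2) dx ≲ ε^(-1/2) (ε + dist(w, ±1))^(-1/2)` and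
`∫ (ε + |cos 2πx - w|)^(-1/2) dx ≲ |log ε|`. Integrating in `p₀` with the first and then in `p₂`
with the second gives the bound `144 ε^(-1/2) |log ε|`, from which both estimates follow as
`|log ε| ≥ 1`.
-/

open Set
open scoped ENNReal

section Trigonometry

variable {θ₁ θ₂ : ℝ}

lemma two_div_pi_mul_sub_mul_sin_le_cos_sub_cos (h₀ : 0 ≤ θ₁) (h₁₂ : θ₁ ≤ θ₂) (hπ : θ₂ ≤ π) :
    2 / π * (θ₂ - θ₁) * sin ((θ₁ + θ₂) / 2) ≤ cos θ₁ - cos θ₂ := by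
  have hsin_mid : 0 ≤ sin ((θ₁ + θ₂) / 2) :=
    sin_nonneg_of_nonneg_of_le_pi (by linarith) (by linarith)
  have hjordan : 2 / π * ((θ₂ - θ₁) / 2) ≤ sin ((θ₂ - θ₁) / 2) :=
    mul_le_sin (by linarith) (by linarith)
  have hcos : cos θ₁ - cos θ₂ = 2 * sin ((θ₁ + θ₂) / 2) * sin ((θ₂ - θ₁) / 2) := by
    rw [cos_sub_cos, show (θ₁ - θ₂) / 2 = -((θ₂ - θ₁) / 2) by ring, sin_neg]; ring
  rw [hcos]
  nlinarith

lemma sq_sub_le_cos_sub_cos (h₀ : 0 ≤ θ₁) (h₁₂ : θ₁ ≤ θ₂) (hπ : θ₂ ≤ π) :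
    (θ₂ - θ₁) ^ 2 ≤ π ^ 2 / 2 * (cos θ₁ - cos θ₂) := by
  have hpi := pi_pos
  -- Jordan's inequality at `(θ₁ + θ₂) / 2` or at its reflection `π - (θ₁ + θ₂) / 2`.
  have hsin_mid : (θ₂ - θ₁) / π ≤ sin ((θ₁ + θ₂) / 2) := by
    rcases le_total ((θ₁ + θ₂) / 2) (π / 2) with h | h
    · have := mul_le_sin (x := (θ₁ + θ₂) / 2) (by linarith) h
      calc (θ₂ - θ₁) / π ≤ 2 / π * ((θ₁ + θ₂) / 2) := by
            rw [div_le_iff₀ hpi]; field_simp; linarith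
        _ ≤ _ := this
    · have := mul_le_sin (x := π - (θ₁ + θ₂) / 2) (by linarith) (by linarith)
      rw [sin_pi_sub] at this
      calc (θ₂ - θ₁) / π ≤ 2 / π * (π - (θ₁ + θ₂) / 2) := by
            rw [div_le_iff₀ hpi]; field_simp; linarith
        _ ≤ _ := this
  have key := two_div_pi_mul_sub_mul_sin_le_cos_sub_cos h₀ h₁₂ hπ
  have hd : 0 ≤ 2 / π * (θ₂ - θ₁) := mul_nonneg (by positivity) (sub_nonneg.2 h₁₂)
  have := mul_le_mul_of_nonneg_left hsin_mid hd
  calc (θ₂ - θ₁) ^ 2 = π ^ 2 / 2 * (2 / π * (θ₂ - θ₁) * ((θ₂ - θ₁) / π)) := by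
        field_simp
    _ ≤ _ := by gcongr; linarith

lemma sqrt_mul_sub_le_cos_sub_cos {δ : ℝ} (h₀ : 0 ≤ θ₁) (h₁₂ : θ₁ ≤ θ₂) (hπ : θ₂ ≤ π)
    (h₁ : |cos θ₁| ≤ 1 - δ) (h₂ : |cos θ₂| ≤ 1 - δ) :
    2 / π * (θ₂ - θ₁) * √δ ≤ cos θ₁ - cos θ₂ := by
  have hμ₀ : 0 ≤ (θ₁ + θ₂) / 2 := by linarith
  have hμπ : (θ₁ + θ₂) / 2 ≤ π := by linarith
  have hcos_le : cos ((θ₁ + θ₂) / 2) ≤ cos θ₁ :=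
    cos_le_cos_of_nonneg_of_le_pi h₀ hμπ (by linarith)
  have hcos_ge : cos θ₂ ≤ cos ((θ₁ + θ₂) / 2) := cos_le_cos_of_nonneg_of_le_pi hμ₀ hπ (by linarith)
  have hcos_mid : |cos ((θ₁ + θ₂) / 2)| ≤ 1 - δ := by
    rw [abs_le] at *; constructor <;> linarith
  have hsin_mid : √δ ≤ sin ((θ₁ + θ₂) / 2) := by
    rw [sqrt_le_iff]
    refine ⟨sin_nonneg_of_nonneg_of_le_pi hμ₀ hμπ, ?_⟩
    nlinarith [sin_sq_add_cos_sq ((θ₁ + θ₂) / 2), sq_abs (cos ((θ₁ + θ₂) / 2)),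
      abs_cos_le_one ((θ₁ + θ₂) / 2), abs_nonneg (cos ((θ₁ + θ₂) / 2))]
  have hd : 0 ≤ 2 / π * (θ₂ - θ₁) := mul_nonneg (by positivity) (sub_nonneg.2 h₁₂)
  calc 2 / π * (θ₂ - θ₁) * √δ ≤ 2 / π * (θ₂ - θ₁) * sin ((θ₁ + θ₂) / 2) := by gcongr
    _ ≤ _ := two_div_pi_mul_sub_mul_sin_le_cos_sub_cos h₀ h₁₂ hπ

end Trigonometry

local notation "ν" => Measure.restrict (volume : Measure ℝ) (Ico 0 1)

lemma measure_le_of_symm_of_sub_le {S : Set ℝ} (hS : ∀ x ∈ S, 1 - x ∈ S) {D : ℝ}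
    (hD : ∀ x ∈ S ∩ Icc 0 (1 / 2), ∀ y ∈ S ∩ Icc 0 (1 / 2), x ≤ y → y - x ≤ D) :
    ν S ≤ ENNReal.ofReal (2 * D) := by
  have hdiam : ∀ T ⊆ S, (∀ x ∈ T, ∀ y ∈ T, |x - y| ≤ D) → volume T ≤ ENNReal.ofReal D :=
    fun T _ hT => (Real.volume_le_diam T).trans (Metric.ediam_le_of_forall_dist_le hT)
  have hlow : ∀ x ∈ S ∩ Icc 0 (1 / 2), ∀ y ∈ S ∩ Icc 0 (1 / 2), |x - y| ≤ D := by
    intro x hx y hy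
    rcases le_total x y with h | h
    · rw [abs_sub_comm, abs_of_nonneg (by linarith)]; exact hD x hx y hy h
    · rw [abs_of_nonneg (by linarith)]; exact hD y hy x hx h
  have hhigh : ∀ x ∈ S ∩ Icc (1 / 2) 1, ∀ y ∈ S ∩ Icc (1 / 2) 1, |x - y| ≤ D := by
    rintro x ⟨hxS, hx₀, hx₁⟩ y ⟨hyS, hy₀, hy₁⟩
    have := hlow (1 - x) ⟨hS x hxS, by linarith, by linarith⟩ (1 - y)
      ⟨hS y hyS, by linarith, by linarith⟩
    rwa [show 1 - x - (1 - y) = -(x - y) by ring, abs_neg] at this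
  calc ν S = volume (S ∩ Ico 0 1) := Measure.restrict_apply' measurableSet_Ico
    _ ≤ volume (S ∩ Icc 0 (1 / 2) ∪ S ∩ Icc (1 / 2) 1) := by
        refine measure_mono fun x ⟨hxS, hx₀, hx₁⟩ => ?_
        rcases le_total x (1 / 2) with h | h
        exacts [Or.inl ⟨hxS, hx₀, h⟩, Or.inr ⟨hxS, h, hx₁.le⟩]
    _ ≤ volume (S ∩ Icc 0 (1 / 2)) + volume (S ∩ Icc (1 / 2) 1) := measure_union_le _ _
    _ ≤ ENNReal.ofReal D + ENNReal.ofReal D :=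
        add_le_add (hdiam _ inter_subset_left hlow) (hdiam _ inter_subset_left hhigh)
    _ = ENNReal.ofReal (2 * D) := by
        rw [ENNReal.ofReal_mul zero_le_two, ENNReal.ofReal_ofNat, two_mul]

lemma cos_two_pi_one_sub (x : ℝ) : cos (2 * π * (1 - x)) = cos (2 * π * x) := by
  rw [show 2 * π * (1 - x) = 2 * π - 2 * π * x by ring, cos_two_pi_sub]

lemma measure_cos_band_le_sqrt (c t : ℝ) :
    ν {x | |cos (2 * π * x) - c| ≤ t} ≤ ENNReal.ofReal √t := by
  have h := measure_le_of_symm_of_sub_le (S := {x | |cos (2 * π * x) - c| ≤ t}) (D := √t / 2)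
    (fun x hx => by simpa only [mem_ofPred_eq, cos_two_pi_one_sub] using hx) ?_
  · rwa [mul_div_cancel₀ _ two_ne_zero] at h
  rintro x ⟨hxS, hx₀, hx₁⟩ y ⟨hyS, hy₀, hy₁⟩ hxy
  have hpi := pi_pos
  have key := sq_sub_le_cos_sub_cos (θ₁ := 2 * π * x) (θ₂ := 2 * π * y) (by positivity)
    (by gcongr) (by nlinarith)
  have hcos : cos (2 * π * x) - cos (2 * π * y) ≤ 2 * t := by
    rw [mem_ofPred_eq, abs_le] at hxS hyS; linarith
  have hsq : (y - x) ^ 2 ≤ t / 4 := by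
    have : π ^ 2 * (4 * (y - x) ^ 2) ≤ π ^ 2 * t := by nlinarith
    nlinarith [le_of_mul_le_mul_left this (by positivity)]
  calc y - x ≤ |y - x| := le_abs_self _
    _ ≤ √(t / 4) := abs_le_sqrt hsq
    _ = √t / 2 := by
        rw [sqrt_div' _ (by norm_num), show (4 : ℝ) = 2 ^ 2 by norm_num, sqrt_sq zero_le_two]

lemma min_abs_sub_one_abs_add_one_le {v : ℝ} (hv : |v| ≤ 1) (c : ℝ) :
    min |c - 1| |c + 1| ≤ |c - v| + (1 - |v|) := by
  rcases abs_cases v with ⟨h, _⟩ | ⟨h, _⟩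
  · have := abs_sub_le c v 1
    rw [abs_sub_comm v 1, abs_of_nonneg (a := 1 - v) (by linarith)] at this
    exact (min_le_left _ _).trans (by linarith)
  · have := abs_sub_le c v (-1)
    rw [sub_neg_eq_add, sub_neg_eq_add, abs_of_nonneg (a := v + 1) (by linarith)] at this
    exact (min_le_right _ _).trans (by linarith)

lemma measure_cos_band_le_div_sqrt {c t : ℝ} (ht : 0 < t) (hd : 0 < min |c - 1| |c + 1|) :
    ν {x | |cos (2 * π * x) - c| ≤ t} ≤ ENNReal.ofReal (2 * t / √(min |c - 1| |c + 1|)) := by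
  set d := min |c - 1| |c + 1|
  have hsd : 0 < √d := sqrt_pos.2 hd
  rcases le_or_gt d (2 * t) with hdt | hdt
  · refine (measure_cos_band_le_sqrt c t).trans (ENNReal.ofReal_le_ofReal ?_)
    rw [le_div_iff₀ hsd]
    have : √d ≤ 2 * √t := by
      rw [show 2 * √t = √(2 ^ 2 * t) by rw [sqrt_mul (by positivity), sqrt_sq zero_le_two]]
      exact sqrt_le_sqrt (by linarith)
    nlinarith [sq_sqrt ht.le, sqrt_nonneg t]
  have h := measure_le_of_symm_of_sub_le (S := {x | |cos (2 * π * x) - c| ≤ t}) (D := t / √d)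
    (fun x hx => by simpa only [mem_ofPred_eq, cos_two_pi_one_sub] using hx) ?_
  · rwa [mul_div_assoc]
  -- On the band `cos` stays away from its critical values `±1`, so it is steep there.
  have hturn : ∀ x ∈ {x | |cos (2 * π * x) - c| ≤ t}, |cos (2 * π * x)| ≤ 1 - d / 4 := by
    intro x hx
    have hx' : |c - cos (2 * π * x)| ≤ t := by rw [abs_sub_comm]; exact hx
    linarith [min_abs_sub_one_abs_add_one_le (abs_cos_le_one (2 * π * x)) c]
  rintro x ⟨hxS, hx₀, hx₁⟩ y ⟨hyS, hy₀, hy₁⟩ hxy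
  have hpi := pi_pos
  have key := sqrt_mul_sub_le_cos_sub_cos (θ₁ := 2 * π * x) (θ₂ := 2 * π * y) (by positivity)
    (by gcongr) (by nlinarith) (hturn x hxS) (hturn y hyS)
  have hcos : cos (2 * π * x) - cos (2 * π * y) ≤ 2 * t := by
    rw [mem_ofPred_eq, abs_le] at hxS hyS; linarith
  rw [sqrt_div' _ (by norm_num), show (4 : ℝ) = 2 ^ 2 by norm_num, sqrt_sq zero_le_two] at key
  rw [le_div_iff₀ hsd]
  have : 2 / π * (2 * π * y - 2 * π * x) * (√d / 2) = 2 * ((y - x) * √d) := by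
    field_simp
  linarith

lemma lintegral_Ioi_add_rpow_neg {ε p u : ℝ} (hp : 0 < p) (hu : 0 < ε + u) :
    ∫⁻ r in Ioi u, ENNReal.ofReal ((ε + r) ^ (-(p + 1))) = ENNReal.ofReal ((ε + u) ^ (-p) / p) := by
  have ha : -(p + 1) < -1 := by linarith
  have hpre : Ioi u = (ε + ·) ⁻¹' Ioi (ε + u) := by rw [preimage_const_add_Ioi, add_sub_cancel_left]
  rw [hpre, (measurePreserving_add_left volume ε).setLIntegral_comp_preimage
      measurableSet_Ioi (f := fun s : ℝ => ENNReal.ofReal (s ^ (-(p + 1)))) (by fun_prop),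
    ← ofReal_integral_eq_lintegral_ofReal (integrableOn_Ioi_rpow_of_lt ha hu)
      ((ae_restrict_iff' measurableSet_Ioi).2
        (ae_of_all _ fun s hs => rpow_nonneg (hu.trans hs).le _)),
    integral_Ioi_rpow_of_lt ha hu, show -(p + 1) + 1 = -p by ring, neg_div_neg_eq]

section LayerCake

variable {α : Type*} [MeasurableSpace α] {μ : Measure α} [SFinite μ] {u : α → ℝ}

lemma lintegral_setLIntegral_Ioi_eq (hu : Measurable u) (h0 : ∀ x, 0 ≤ u x) {k : ℝ → ℝ≥0∞}
    (hk : Measurable k) :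
    ∫⁻ x, (∫⁻ r in Ioi (u x), k r) ∂μ = ∫⁻ r in Ioi 0, μ {x | u x < r} * k r := by
  set F : α × ℝ → ℝ≥0∞ := {q | u q.1 < q.2}.indicator (fun q => k q.2)
  have hF : Measurable F :=
    (hk.comp measurable_snd).indicator (measurableSet_lt (hu.comp measurable_fst) measurable_snd)
  calc ∫⁻ x, (∫⁻ r in Ioi (u x), k r) ∂μ = ∫⁻ x, (∫⁻ r in Ioi 0, F (x, r)) ∂μ := by
        refine lintegral_congr fun x => ?_
        rw [← lintegral_indicator measurableSet_Ioi, ← lintegral_indicator measurableSet_Ioi]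
        refine lintegral_congr fun r => ?_
        by_cases hr : u x < r
        · simp [F, hr, (h0 x).trans_lt hr]
        · simp [F, Set.indicator_apply, hr]
    _ = ∫⁻ r in Ioi 0, ∫⁻ x, F (x, r) ∂μ := lintegral_lintegral_swap hF.aemeasurable
    _ = ∫⁻ r in Ioi 0, μ {x | u x < r} * k r := by
        refine lintegral_congr fun r => ?_
        change ∫⁻ x, {x | u x < r}.indicator (fun _ => k r) x ∂μ = _
        rw [lintegral_indicator_const (measurableSet_lt hu measurable_const), mul_comm]

lemma lintegral_add_rpow_neg_eq {ε p : ℝ} (hε : 0 < ε) (hp : 0 < p) (hu : Measurable u)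
    (h0 : ∀ x, 0 ≤ u x) :
    ∫⁻ x, ENNReal.ofReal ((ε + u x) ^ (-p)) ∂μ =
      ENNReal.ofReal p *
        ∫⁻ r in Ioi 0, μ {x | u x < r} * ENNReal.ofReal ((ε + r) ^ (-(p + 1))) := by
  rw [← lintegral_setLIntegral_Ioi_eq hu h0 (by fun_prop),
    ← lintegral_const_mul' _ _ ENNReal.ofReal_ne_top]
  refine lintegral_congr fun x => ?_
  rw [lintegral_Ioi_add_rpow_neg hp (by linarith [h0 x]), ← ENNReal.ofReal_mul hp.le,
    mul_div_cancel₀ _ hp.ne']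

lemma lintegral_add_rpow_neg_le {ε p s A : ℝ} (hε : 0 < ε) (hp : 0 < p) (hsp : s < p) (hA : 0 ≤ A)
    (hu : Measurable u) (h0 : ∀ x, 0 ≤ u x)
    (hμ : ∀ r > 0, μ {x | u x < r} ≤ ENNReal.ofReal (A * (ε + r) ^ s)) :
    ∫⁻ x, ENNReal.ofReal ((ε + u x) ^ (-p)) ∂μ ≤
      ENNReal.ofReal (p * A * (ε ^ (-(p - s)) / (p - s))) := by
  rw [lintegral_add_rpow_neg_eq hε hp hu h0]
  calc _ ≤ ENNReal.ofReal p *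
        ∫⁻ r in Ioi 0, ENNReal.ofReal A * ENNReal.ofReal ((ε + r) ^ (-((p - s) + 1))) := by
        gcongr 1
        refine setLIntegral_mono' measurableSet_Ioi fun r (hr : 0 < r) => ?_
        have hεr : 0 < ε + r := by linarith
        calc μ {x | u x < r} * ENNReal.ofReal ((ε + r) ^ (-(p + 1)))
            ≤ ENNReal.ofReal (A * (ε + r) ^ s) * ENNReal.ofReal ((ε + r) ^ (-(p + 1))) := by
              gcongr; exact hμ r hr
          _ = ENNReal.ofReal A * ENNReal.ofReal ((ε + r) ^ (-((p - s) + 1))) := by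
              rw [← ENNReal.ofReal_mul (by positivity), ← ENNReal.ofReal_mul hA, mul_assoc,
                ← rpow_add hεr]
              ring_nf
    _ = _ := by
        rw [lintegral_const_mul' _ _ ENNReal.ofReal_ne_top,
          lintegral_Ioi_add_rpow_neg (by linarith) (by linarith), add_zero,
          ← ENNReal.ofReal_mul hA, ← ENNReal.ofReal_mul hp.le, mul_assoc]

end LayerCake

lemma rpow_neg_one_div_two {x : ℝ} (hx : 0 ≤ x) : x ^ (-(1 : ℝ) / 2) = (√x)⁻¹ := by
  rw [sqrt_eq_rpow, ← rpow_neg hx, neg_div]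

lemma measurable_abs_cos_sub (w : ℝ) : Measurable fun x : ℝ => |cos (2 * π * x) - w| := by
  fun_prop

lemma lintegral_cos_rpow_neg_three_halves_le_of_le {ε w : ℝ} (hε : 0 < ε)
    (hdε : min |w - 1| |w + 1| ≤ ε) :
    ∫⁻ x, ENNReal.ofReal ((ε + |cos (2 * π * x) - w|) ^ (-(3 : ℝ) / 2)) ∂ν ≤
      ENNReal.ofReal (9 * ε ^ (-(1 : ℝ) / 2) * (ε + min |w - 1| |w + 1|) ^ (-(1 : ℝ) / 2)) := by
  set d := min |w - 1| |w + 1|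
  have hd : 0 ≤ d := le_min (abs_nonneg _) (abs_nonneg _)
  rw [neg_div]
  refine (lintegral_add_rpow_neg_le (s := 1 / 2) (A := 1) hε (by norm_num) (by norm_num)
    zero_le_one (measurable_abs_cos_sub w) (fun _ => abs_nonneg _) fun r hr => ?_).trans
    (ENNReal.ofReal_le_ofReal ?_)
  · refine (measure_mono fun x (hx : _ < r) => hx.le).trans
      ((measure_cos_band_le_sqrt w r).trans (ENNReal.ofReal_le_ofReal ?_))
    rw [one_mul, ← sqrt_eq_rpow]
    exact sqrt_le_sqrt (by linarith)
  have hsε := sqrt_pos.2 hε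
  have h2 : √(ε + d) ≤ 2 * √ε := by
    rw [show 2 * √ε = √(2 ^ 2 * ε) by rw [sqrt_mul (by positivity), sqrt_sq zero_le_two]]
    exact sqrt_le_sqrt (by linarith)
  have hinv : 2⁻¹ * (√ε)⁻¹ ≤ (√(ε + d))⁻¹ := by
    rw [← mul_inv]; exact inv_anti₀ (sqrt_pos.2 (by linarith)) h2
  have hεinv : ε ^ (-1 : ℝ) = (√ε)⁻¹ * (√ε)⁻¹ := by
    rw [rpow_neg_one, ← mul_inv, mul_self_sqrt hε.le]
  rw [rpow_neg_one_div_two hε.le, rpow_neg_one_div_two (by linarith)]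
  norm_num
  rw [hεinv]
  nlinarith [inv_pos.2 hsε]

lemma lintegral_cos_rpow_neg_three_halves_le_of_ge {ε w : ℝ} (hε : 0 < ε)
    (hεd : ε ≤ min |w - 1| |w + 1|) :
    ∫⁻ x, ENNReal.ofReal ((ε + |cos (2 * π * x) - w|) ^ (-(3 : ℝ) / 2)) ∂ν ≤
      ENNReal.ofReal (9 * ε ^ (-(1 : ℝ) / 2) * (ε + min |w - 1| |w + 1|) ^ (-(1 : ℝ) / 2)) := by
  set d := min |w - 1| |w + 1|
  have hdpos : 0 < d := hε.trans_le hεd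
  have hsd : 0 < √d := sqrt_pos.2 hdpos
  rw [neg_div]
  refine (lintegral_add_rpow_neg_le (s := 1) (A := 2 / √d) hε (by norm_num) (by norm_num)
    (by positivity) (measurable_abs_cos_sub w) (fun _ => abs_nonneg _) fun r hr => ?_).trans
    (ENNReal.ofReal_le_ofReal ?_)
  · refine (measure_mono fun x (hx : _ < r) => hx.le).trans
      ((measure_cos_band_le_div_sqrt hr hdpos).trans (ENNReal.ofReal_le_ofReal ?_))
    rw [rpow_one, div_mul_eq_mul_div]
    gcongr
    linarith
  have h2 : 6 / √d ≤ 9 * (√(ε + d))⁻¹ := by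
    rw [div_le_iff₀ hsd, show 9 * (√(ε + d))⁻¹ * √d = 9 * √d / √(ε + d) by ring,
      le_div_iff₀ (sqrt_pos.2 (by linarith)),
      show 9 * √d = √(9 ^ 2 * d) by rw [sqrt_mul (by positivity), sqrt_sq (by norm_num)],
      show 6 * √(ε + d) = √(6 ^ 2 * (ε + d)) by
        rw [sqrt_mul (by positivity), sqrt_sq (by norm_num)]]
    exact sqrt_le_sqrt (by linarith)
  rw [show -(3 / 2 - 1 : ℝ) = -1 / 2 by norm_num, rpow_neg_one_div_two (by linarith : 0 ≤ ε + d)]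
  have hX : 0 ≤ ε ^ (-(1 : ℝ) / 2) := rpow_nonneg hε.le _
  calc 3 / 2 * (2 / √d) * (ε ^ (-(1 : ℝ) / 2) / (3 / 2 - 1)) = 6 / √d * ε ^ (-(1 : ℝ) / 2) := by
        ring
    _ ≤ 9 * (√(ε + d))⁻¹ * ε ^ (-(1 : ℝ) / 2) := by gcongr
    _ = _ := by ring

instance : IsProbabilityMeasure ν := ⟨by simp⟩

lemma lintegral_cos_rpow_neg_three_halves_le {ε : ℝ} (hε : 0 < ε) (w : ℝ) :
    ∫⁻ x, ENNReal.ofReal ((ε + |cos (2 * π * x) - w|) ^ (-(3 : ℝ) / 2)) ∂ν ≤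
      ENNReal.ofReal (9 * ε ^ (-(1 : ℝ) / 2)) * (ENNReal.ofReal ((ε + |w - 1|) ^ (-(1 : ℝ) / 2)) +
        ENNReal.ofReal ((ε + |w + 1|) ^ (-(1 : ℝ) / 2))) := by
  refine ((le_total (min |w - 1| |w + 1|) ε).elim
    (lintegral_cos_rpow_neg_three_halves_le_of_le hε)
    (lintegral_cos_rpow_neg_three_halves_le_of_ge hε)).trans ?_
  rw [ENNReal.ofReal_mul (by positivity), ← ENNReal.ofReal_add (by positivity) (by positivity)]
  gcongr
  rcases min_choice |w - 1| |w + 1| with h | h <;> rw [h]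
  exacts [le_add_of_nonneg_right (by positivity), le_add_of_nonneg_left (by positivity)]

lemma one_le_neg_log {ε : ℝ} (hε : 0 < ε) (hε' : ε ≤ 1 / 3) : 1 ≤ -log ε := by
  rw [← log_inv, le_log_iff_exp_le (by positivity)]
  calc exp 1 ≤ 3 := exp_one_lt_three.le
    _ ≤ ε⁻¹ := by rw [le_inv_comm₀ (by norm_num) hε]; linarith

lemma lintegral_Ioc_add_inv {ε : ℝ} (hε : 0 < ε) :
    ∫⁻ r in Ioc 0 1, ENNReal.ofReal ((ε + r)⁻¹) = ENNReal.ofReal (log ((ε + 1) / ε)) := by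
  have hcont : ContinuousOn (fun r : ℝ => (ε + r)⁻¹) (Icc 0 1) :=
    (continuousOn_const.add continuousOn_id).inv₀ fun r hr => (by linarith [hr.1] : ε + r ≠ 0)
  rw [← ofReal_integral_eq_lintegral_ofReal (hcont.integrableOn_Icc.mono_set Ioc_subset_Icc_self)
      ((ae_restrict_iff' measurableSet_Ioc).2 (ae_of_all _ fun r hr => by
        have := hr.1; positivity)),
    ← intervalIntegral.integral_of_le zero_le_one,
    intervalIntegral.integral_comp_add_left (fun r => r⁻¹), add_zero,
    integral_inv_of_pos hε (by linarith)]

lemma lintegral_cos_rpow_neg_half_le {ε : ℝ} (hε : 0 < ε) (hε' : ε ≤ 1 / 3) (w : ℝ) :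
    ∫⁻ x, ENNReal.ofReal ((ε + |cos (2 * π * x) - w|) ^ (-(1 : ℝ) / 2)) ∂ν ≤
      ENNReal.ofReal (2 * -log ε) := by
  set u := fun x : ℝ => |cos (2 * π * x) - w|
  rw [neg_div, lintegral_add_rpow_neg_eq hε (by norm_num) (measurable_abs_cos_sub w)
      (fun _ => abs_nonneg _), ← Ioc_union_Ioi_eq_Ioi zero_le_one,
    lintegral_union measurableSet_Ioi (Ioc_disjoint_Ioi le_rfl)]
  have hnear : ∫⁻ r in Ioc 0 1, ν {x | u x < r} * ENNReal.ofReal ((ε + r) ^ (-(1 / 2 + 1 : ℝ))) ≤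
      ENNReal.ofReal (log ((ε + 1) / ε)) := by
    rw [← lintegral_Ioc_add_inv hε]
    refine setLIntegral_mono' measurableSet_Ioc fun r hr => ?_
    have hεr : 0 < ε + r := by linarith [hr.1]
    calc ν {x | u x < r} * ENNReal.ofReal ((ε + r) ^ (-(1 / 2 + 1 : ℝ)))
        ≤ ENNReal.ofReal ((ε + r) ^ (1 / 2 : ℝ)) *
            ENNReal.ofReal ((ε + r) ^ (-(1 / 2 + 1 : ℝ))) := by
          gcongr
          refine (measure_mono fun x (hx : u x < r) => hx.le).trans
            ((measure_cos_band_le_sqrt w r).trans (ENNReal.ofReal_le_ofReal ?_))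
          rw [← sqrt_eq_rpow]
          exact sqrt_le_sqrt (by linarith)
      _ = ENNReal.ofReal ((ε + r)⁻¹) := by
          rw [← ENNReal.ofReal_mul (by positivity), ← rpow_add hεr, ← rpow_neg_one]
          norm_num
  have hfar : ∫⁻ r in Ioi 1, ν {x | u x < r} * ENNReal.ofReal ((ε + r) ^ (-(1 / 2 + 1 : ℝ))) ≤
      ENNReal.ofReal 2 := by
    calc _ ≤ ∫⁻ r in Ioi 1, ENNReal.ofReal ((ε + r) ^ (-(1 / 2 + 1 : ℝ))) :=
          setLIntegral_mono' measurableSet_Ioi fun r _ =>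
            mul_le_of_le_one_left zero_le prob_le_one
      _ = ENNReal.ofReal ((ε + 1) ^ (-(1 / 2) : ℝ) / (1 / 2)) :=
          lintegral_Ioi_add_rpow_neg (by norm_num) (by linarith)
      _ ≤ ENNReal.ofReal 2 := by
          refine ENNReal.ofReal_le_ofReal ?_
          have := rpow_le_one_of_one_le_of_nonpos (by linarith : 1 ≤ ε + 1)
            (by norm_num : -(1 / 2 : ℝ) ≤ 0)
          linarith
  have hL := one_le_neg_log hε hε'
  have hlog₀ : 0 ≤ log ((ε + 1) / ε) :=
    log_nonneg ((one_le_div hε).2 (by linarith))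
  have hlog : log ((ε + 1) / ε) ≤ ε - log ε := by
    rw [log_div (by linarith) hε.ne']
    linarith [log_le_sub_one_of_pos (by linarith : 0 < ε + 1)]
  calc _ ≤ ENNReal.ofReal (1 / 2) * (ENNReal.ofReal (log ((ε + 1) / ε)) + ENNReal.ofReal 2) := by
        gcongr
    _ = ENNReal.ofReal (1 / 2 * (log ((ε + 1) / ε) + 2)) := by
        rw [← ENNReal.ofReal_add (by linarith) (by norm_num), ← ENNReal.ofReal_mul (by norm_num)]
    _ ≤ ENNReal.ofReal (2 * -log ε) := ENNReal.ofReal_le_ofReal (by linarith)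

lemma lintegral_pi_fin_three {α : Type*} [MeasurableSpace α] (μ : Measure α) [SigmaFinite μ]
    {G : α → α → α → ℝ≥0∞} (hG : Measurable fun q : α × α × α => G q.1 q.2.1 q.2.2) :
    ∫⁻ p, G (p 0) (p 1) (p 2) ∂Measure.pi (fun _ : Fin 3 => μ) =
      ∫⁻ y, ∫⁻ z, ∫⁻ x, G x y z ∂μ ∂μ ∂μ := by
  have hG' : Measurable fun q : α × (Fin 2 → α) => G q.1 (q.2 0) (q.2 1) :=
    hG.comp (f := fun q : α × (Fin 2 → α) => (q.1, q.2 0, q.2 1)) (by fun_prop)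
  have hsplit := (measurePreserving_piFinSuccAbove (fun _ : Fin 3 => μ) 0).lintegral_comp hG'
  have hpair := (measurePreserving_piFinTwo fun _ : Fin 2 => μ).lintegral_comp
    (f := fun q : α × α => ∫⁻ x, G x q.1 q.2 ∂μ) hG.lintegral_prod_left'
  calc ∫⁻ p, G (p 0) (p 1) (p 2) ∂Measure.pi (fun _ : Fin 3 => μ)
      = ∫⁻ q : α × (Fin 2 → α), G q.1 (q.2 0) (q.2 1) ∂μ.prod (Measure.pi fun _ => μ) := hsplit
    _ = ∫⁻ w : Fin 2 → α, ∫⁻ x, G x (w 0) (w 1) ∂μ ∂Measure.pi fun _ => μ :=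
        lintegral_prod_symm _ hG'.aemeasurable
    _ = ∫⁻ q : α × α, ∫⁻ x, G x q.1 q.2 ∂μ ∂μ.prod μ := hpair
    _ = ∫⁻ y, ∫⁻ z, ∫⁻ x, G x y z ∂μ ∂μ ∂μ := lintegral_prod _ hG.lintegral_prod_left'.aemeasurable

lemma restrict_box3 : volume.restrict box3 = Measure.pi fun _ : Fin 3 => ν := by
  rw [box3, volume_pi, Measure.restrict_pi_pi]

lemma disp_mem_Icc (p : Fin 3 → ℝ) : disp p ∈ Icc 0 6 := by
  rw [disp, Fin.sum_univ_three]
  constructor <;> linarith [cos_le_one (2 * π * p 0), cos_le_one (2 * π * p 1),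
    cos_le_one (2 * π * p 2), neg_one_le_cos (2 * π * p 0), neg_one_le_cos (2 * π * p 1),
    neg_one_le_cos (2 * π * p 2)]

lemma lintegral_disp_rpow_le {ε : ℝ} (hε : 0 < ε) (hε' : ε ≤ 1 / 3) (a : ℝ) :
    ∫⁻ p, ENNReal.ofReal ((ε + |disp p - a|) ^ (-(3 : ℝ) / 2)) ∂Measure.pi (fun _ : Fin 3 => ν) ≤
      ENNReal.ofReal (36 * ε ^ (-(1 : ℝ) / 2) * -log ε) := by
  have hdisp : ∀ p, |disp p - a| =
      |cos (2 * π * p 0) - (3 - a - cos (2 * π * p 1) - cos (2 * π * p 2))| := fun p => by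
    rw [disp, Fin.sum_univ_three, abs_sub_comm]; ring_nf
  simp_rw [hdisp]
  rw [lintegral_pi_fin_three ν (G := fun x y z => ENNReal.ofReal
    ((ε + |cos (2 * π * x) - (3 - a - cos (2 * π * y) - cos (2 * π * z))|) ^ (-(3 : ℝ) / 2)))
    (by fun_prop)]
  have hL := one_le_neg_log hε hε'
  calc _ ≤ ∫⁻ y, ∫⁻ z, ENNReal.ofReal (9 * ε ^ (-(1 : ℝ) / 2)) *
        (ENNReal.ofReal ((ε + |cos (2 * π * z) - (2 - a - cos (2 * π * y))|) ^ (-(1 : ℝ) / 2)) +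
          ENNReal.ofReal ((ε + |cos (2 * π * z) - (4 - a - cos (2 * π * y))|) ^ (-(1 : ℝ) / 2)))
          ∂ν ∂ν := by
        refine lintegral_mono fun y => lintegral_mono fun z =>
          (lintegral_cos_rpow_neg_three_halves_le hε _).trans_eq ?_
        rw [← abs_neg (_ - 1), ← abs_neg (_ + 1)]
        ring_nf
    _ ≤ ∫⁻ y, ENNReal.ofReal (9 * ε ^ (-(1 : ℝ) / 2)) *
        (ENNReal.ofReal (2 * -log ε) + ENNReal.ofReal (2 * -log ε)) ∂ν := by
        gcongr with y
        rw [lintegral_const_mul' _ _ ENNReal.ofReal_ne_top, lintegral_add_left (by fun_prop)]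
        gcongr <;> exact lintegral_cos_rpow_neg_half_le hε hε' _
    _ = ENNReal.ofReal (36 * ε ^ (-(1 : ℝ) / 2) * -log ε) := by
        rw [lintegral_const, measure_univ, mul_one,
          ← ENNReal.ofReal_add (by linarith) (by linarith),
          ← ENNReal.ofReal_mul (by positivity)]
        ring_nf

lemma add_abs_re_le_two_mul_norm {z : ℂ} {ε : ℝ} (h : ε ≤ |z.re| ∨ ε ≤ |z.im|) :
    ε + |z.re| ≤ 2 * ‖z‖ := by
  have := Complex.abs_re_le_norm z
  have := Complex.abs_im_le_norm z
  rcases h with h | h <;> linarith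

lemma add_abs_sub_re_le_two_mul_norm {e ε : ℝ} {γ : ℂ} (he : e ∈ Icc 0 6) (hε : 0 ≤ ε)
    (hε' : ε ≤ 1 / 2) (hγ : γ ∈ RectI) :
    ε + |e - γ.re| ≤ 2 * ‖(e : ℂ) - γ - Complex.I * ε‖ := by
  obtain ⟨he₀, he₆⟩ := he
  obtain ⟨-, -, -, -, hside⟩ := hγ
  have hre : ((e : ℂ) - γ - Complex.I * ε).re = e - γ.re := by simp
  have him : ((e : ℂ) - γ - Complex.I * ε).im = -γ.im - ε := by simp
  rw [← hre]
  refine add_abs_re_le_two_mul_norm ?_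
  rw [hre, him]
  rcases hside with h | h | h | h <;> rw [h]
  · left; rw [abs_of_nonneg (by linarith)]; linarith
  · left; rw [abs_of_nonpos (by linarith)]; linarith
  · right; rw [abs_of_nonneg (by linarith)]; linarith
  · right; rw [neg_zero, zero_sub, abs_neg, abs_of_nonneg hε]

lemma norm_rpow_neg_three_halves_le {e ε : ℝ} {γ : ℂ} (he : e ∈ Icc 0 6) (hε : 0 < ε)
    (hε' : ε ≤ 1 / 2) (hγ : γ ∈ RectI) :
    ‖(e : ℂ) - γ - Complex.I * ε‖ ^ (-(3 : ℝ) / 2) ≤ 4 * (ε + |e - γ.re|) ^ (-(3 : ℝ) / 2) := by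
  have ht : 0 < ε + |e - γ.re| := by positivity
  have htwo : (1 : ℝ) / 4 ≤ 2 ^ (-(3 : ℝ) / 2) := by
    calc (1 : ℝ) / 4 = 2 ^ (-2 : ℝ) := by norm_num
      _ ≤ 2 ^ (-(3 : ℝ) / 2) := rpow_le_rpow_of_exponent_le one_le_two (by norm_num)
  calc ‖(e : ℂ) - γ - Complex.I * ε‖ ^ (-(3 : ℝ) / 2) ≤ ((ε + |e - γ.re|) / 2) ^ (-(3 : ℝ) / 2) :=
        rpow_le_rpow_of_nonpos (by positivity)
          (by linarith [add_abs_sub_re_le_two_mul_norm he hε.le hε' hγ]) (by norm_num)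
    _ = (ε + |e - γ.re|) ^ (-(3 : ℝ) / 2) / 2 ^ (-(3 : ℝ) / 2) := div_rpow ht.le zero_le_two _
    _ ≤ 4 * (ε + |e - γ.re|) ^ (-(3 : ℝ) / 2) := by
        rw [div_le_iff₀ (by positivity)]
        nlinarith [rpow_pos_of_pos ht (-(3 : ℝ) / 2)]

lemma integral_resolvent_le {ε : ℝ} (hε : 0 < ε) (hε' : ε ≤ 1 / 3) {γ : ℂ} (hγ : γ ∈ RectI) :
    ∫ p in box3, ‖(disp p : ℂ) - γ - Complex.I * ε‖ ^ (-(3 : ℝ) / 2) ≤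
      144 * ε ^ (-(1 : ℝ) / 2) * -log ε := by
  have hL := one_le_neg_log hε hε'
  have hlintegral :
      ∫⁻ p in box3, ENNReal.ofReal ‖‖(disp p : ℂ) - γ - Complex.I * ε‖ ^ (-(3 : ℝ) / 2)‖
      ≤ ENNReal.ofReal (144 * ε ^ (-(1 : ℝ) / 2) * -log ε) :=
    calc _ ≤ ∫⁻ p in box3, ENNReal.ofReal 4 *
          ENNReal.ofReal ((ε + |disp p - γ.re|) ^ (-(3 : ℝ) / 2)) := by
          refine lintegral_mono fun p => ?_
          rw [norm_of_nonneg (by positivity), ← ENNReal.ofReal_mul zero_le_four]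
          exact ENNReal.ofReal_le_ofReal
            (norm_rpow_neg_three_halves_le (disp_mem_Icc p) hε (by linarith) hγ)
      _ ≤ ENNReal.ofReal 4 * ENNReal.ofReal (36 * ε ^ (-(1 : ℝ) / 2) * -log ε) := by
          rw [lintegral_const_mul' _ _ ENNReal.ofReal_ne_top, restrict_box3]
          gcongr
          exact lintegral_disp_rpow_le hε hε' _
      _ = ENNReal.ofReal (144 * ε ^ (-(1 : ℝ) / 2) * -log ε) := by
          rw [← ENNReal.ofReal_mul zero_le_four]; ring_nf
  exact (le_norm_self _).trans ((norm_integral_le_lintegral_norm _).trans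
    (ENNReal.toReal_le_of_le_ofReal (by positivity) hlintegral))

theorem resolvent_L32_estimate :
    ∃ C C' : ℝ, ∀ ε : ℝ, 0 < ε → ε ≤ 1 / 3 → ∀ γ ∈ RectI,
      (∫ p in box3, ‖(disp p : ℂ) - γ - Complex.I * (ε : ℂ)‖ ^ (-(3 : ℝ) / 2))
          ≤ C * ε ^ (-(1 : ℝ) / 2) * |Real.log ε| ^ ((3 : ℝ) / 2) ∧
      (∫ p in box3, ‖(disp p : ℂ) - γ - Complex.I * (ε : ℂ)‖ ^ (-(3 : ℝ) / 2))
            ^ ((2 : ℝ) / 3)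
          ≤ C' * ε ^ (-(1 : ℝ) / 3) * |Real.log ε| := by
  refine ⟨144, 144, fun ε hε hε' γ hγ => ?_⟩
  have habs : |log ε| = -log ε := abs_of_neg (log_neg hε (by linarith))
  have hL : 1 ≤ |log ε| := habs ▸ one_le_neg_log hε hε'
  have hI := habs ▸ integral_resolvent_le hε hε' hγ
  have hI₀ : 0 ≤ ∫ p in box3, ‖(disp p : ℂ) - γ - Complex.I * ε‖ ^ (-(3 : ℝ) / 2) :=
    integral_nonneg fun p => by positivity
  have hfirst : ∫ p in box3, ‖(disp p : ℂ) - γ - Complex.I * ε‖ ^ (-(3 : ℝ) / 2) ≤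
      144 * ε ^ (-(1 : ℝ) / 2) * |log ε| ^ ((3 : ℝ) / 2) :=
    hI.trans (by gcongr; exact self_le_rpow_of_one_le hL (by norm_num))
  refine ⟨hfirst, ?_⟩
  calc _ ≤ (144 * ε ^ (-(1 : ℝ) / 2) * |log ε| ^ ((3 : ℝ) / 2)) ^ ((2 : ℝ) / 3) :=
        rpow_le_rpow hI₀ hfirst (by norm_num)
    _ = 144 ^ ((2 : ℝ) / 3) * ε ^ (-(1 : ℝ) / 3) * |log ε| := by
        rw [mul_rpow (by positivity) (by positivity), mul_rpow (by positivity) (by positivity),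
          ← rpow_mul hε.le, ← rpow_mul (by positivity)]
        norm_num
    _ ≤ 144 * ε ^ (-(1 : ℝ) / 3) * |log ε| := by
        gcongr
        exact rpow_le_self_of_one_le (by norm_num) (by norm_num)
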